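/- arXiv:2203.04182 — 5 statements merged into one kernel-verified Lean document; each statement's English description precedes it below -/
import Mathlib

section
/- A permutation π of [n] is a forest permutation if and only if π avoids both the pattern 321 and the pattern 3412. -/
/-- The permutation graph of a permutation `π` of `Fin n`: there is an edge between `i` and `j`
for every inversion, i.e. every pair `i < j` with `π i > π j`. -/
def permGraph {n : ℕ} (π : Equiv.Perm (Fin n)) : SimpleGraph (Fin n) where
  Adj i j := (i < j ∧ π j < π i) ∨ (j < i ∧ π i < π j)
  symm := ⟨by intro i j h; tauto⟩
  loopless := ⟨by intro i h; rcases h with ⟨h, _⟩ | ⟨h, _⟩ <;> exact lt_irrefl _ h⟩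

/-- A forest permutation: its permutation graph is acyclic. -/
def IsForestPerm {n : ℕ} (π : Equiv.Perm (Fin n)) : Prop := (permGraph π).IsAcyclic

/-- The number of occurrences of the pattern `σ` in the permutation `π`. -/
noncomputable def occ {m n : ℕ} (σ : Equiv.Perm (Fin m)) (π : Equiv.Perm (Fin n)) : ℕ :=
  Set.ncard {f : Fin m → Fin n |
    StrictMono f ∧ ∀ j k : Fin m, π (f j) < π (f k) ↔ σ j < σ k}

/-- The pattern 321. -/
def perm321 : Equiv.Perm (Fin 3) := ⟨![2, 1, 0], ![2, 1, 0], by decide, by decide⟩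

/-- The pattern 3412. -/
def perm3412 : Equiv.Perm (Fin 4) := ⟨![2, 3, 0, 1], ![2, 3, 0, 1], by decide, by decide⟩

/-!
A pattern 321 at positions `i < j < k` is a triangle of `G_π`, and a pattern 3412 at positions
`i < j < k < l` is the 4-cycle `i k j l`. Conversely, on a cycle of `G_π` let `b` be the vertex of
least value. Its two cycle neighbours `x < y` lie to the left of `b`, and the neighbour `c ≠ b`
of `x` on the cycle has value above `π b`. Comparing the positions and values of `x, y, b, c`
always exhibits a 321 or a 3412.
-/

open SimpleGraph Equiv

namespace SimpleGraph

variable {V : Type*} {G : SimpleGraph V} {a b c d : V}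

lemma IsAcyclic.not_adj_of_adj_of_adj (hG : G.IsAcyclic) (hab : G.Adj a b) (hbc : G.Adj b c)
    (hac : a ≠ c) : ¬G.Adj a c := by
  intro hca
  have hp : (Walk.cons hab (Walk.cons hbc Walk.nil)).IsPath := by
    simp [hab.ne, hbc.ne, hac]
  exact hbc.ne (hG.eq_snd_of_adj_start hp hca (by simp)).symm

lemma IsAcyclic.not_adj_of_adj_of_adj_of_adj (hG : G.IsAcyclic) (hab : G.Adj a b)
    (hbc : G.Adj b c) (hcd : G.Adj c d) (hac : a ≠ c) (hbd : b ≠ d) : ¬G.Adj a d := by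
  intro had
  have hp : (Walk.cons hab (Walk.cons hbc (Walk.cons hcd Walk.nil))).IsPath := by
    simp [hab.ne, hbc.ne, hcd.ne, hac, had.ne, hbd]
  exact hbd (hG.eq_snd_of_adj_start hp had (by simp)).symm

end SimpleGraph

section

variable {n : ℕ} (π : Perm (Fin n))

def Contains321 : Prop :=
  ∃ i j k : Fin n, i < j ∧ j < k ∧ π k < π j ∧ π j < π i

def Contains3412 : Prop :=
  ∃ i j k l : Fin n, i < j ∧ j < k ∧ k < l ∧ π k < π l ∧ π l < π i ∧ π i < π j

lemma occ_ne_zero_iff {m : ℕ} (σ : Perm (Fin m)) :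
    occ σ π ≠ 0 ↔ ∃ f : Fin m → Fin n, StrictMono f ∧ ∀ j k, π (f j) < π (f k) ↔ σ j < σ k := by
  rw [occ, Ne, Set.ncard_eq_zero (Set.toFinite _), ← ne_eq, ← Set.nonempty_iff_ne_empty]
  rfl

lemma occ_ne_zero_of_comp_eq {m : ℕ} {σ : Perm (Fin m)} {f g : Fin m → Fin n}
    (hf : StrictMono f) (hg : StrictMono g) (h : ∀ a, π (f a) = g (σ a)) : occ σ π ≠ 0 :=
  (occ_ne_zero_iff π σ).2 ⟨f, hf, fun j k => by rw [h, h]; exact hg.lt_iff_lt⟩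

lemma occ_perm321_ne_zero_iff : occ perm321 π ≠ 0 ↔ Contains321 π := by
  constructor
  · rw [occ_ne_zero_iff]
    rintro ⟨f, hf, hπf⟩
    exact ⟨f 0, f 1, f 2, hf (by decide), hf (by decide), (hπf 2 1).2 (by decide),
      (hπf 1 0).2 (by decide)⟩
  · rintro ⟨i, j, k, hij, hjk, hπkj, hπji⟩
    refine occ_ne_zero_of_comp_eq π (f := ![i, j, k]) (g := ![π k, π j, π i])
      (strictMono_vecEmpty.vecCons hjk |>.vecCons hij)
      (strictMono_vecEmpty.vecCons hπji |>.vecCons hπkj) fun a => ?_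
    fin_cases a <;> rfl

lemma occ_perm3412_ne_zero_iff : occ perm3412 π ≠ 0 ↔ Contains3412 π := by
  constructor
  · rw [occ_ne_zero_iff]
    rintro ⟨f, hf, hπf⟩
    exact ⟨f 0, f 1, f 2, f 3, hf (by decide), hf (by decide), hf (by decide),
      (hπf 2 3).2 (by decide), (hπf 3 0).2 (by decide), (hπf 0 1).2 (by decide)⟩
  · rintro ⟨i, j, k, l, hij, hjk, hkl, hπkl, hπli, hπij⟩
    refine occ_ne_zero_of_comp_eq π (f := ![i, j, k, l]) (g := ![π k, π l, π i, π j])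
      (strictMono_vecEmpty.vecCons hkl |>.vecCons hjk |>.vecCons hij)
      (strictMono_vecEmpty.vecCons hπij |>.vecCons hπli |>.vecCons hπkl) fun a => ?_
    fin_cases a <;> rfl

variable {π}

lemma permGraph_adj_of_lt {i j : Fin n} (hij : i < j) (hπ : π j < π i) : (permGraph π).Adj i j :=
  Or.inl ⟨hij, hπ⟩

lemma permGraph_adj_lt_iff {i j : Fin n} (h : (permGraph π).Adj i j) : i < j ↔ π j < π i :=
  ⟨fun hij => (h.resolve_right fun h' => h'.1.not_gt hij).2,
    fun hπ => (h.resolve_right fun h' => h'.2.not_gt hπ).1⟩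

lemma Contains321.not_isForestPerm (h : Contains321 π) : ¬IsForestPerm π := by
  obtain ⟨i, j, k, hij, hjk, hπkj, hπji⟩ := h
  have hik := hij.trans hjk
  exact fun hπ => hπ.not_adj_of_adj_of_adj (permGraph_adj_of_lt hij hπji)
    (permGraph_adj_of_lt hjk hπkj) hik.ne (permGraph_adj_of_lt hik (hπkj.trans hπji))

lemma Contains3412.not_isForestPerm (h : Contains3412 π) : ¬IsForestPerm π := by
  obtain ⟨i, j, k, l, hij, hjk, hkl, hπkl, hπli, hπij⟩ := h
  have hki := hπkl.trans hπli
  exact fun hπ => hπ.not_adj_of_adj_of_adj_of_adj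
    (permGraph_adj_of_lt (hij.trans hjk) hki) (permGraph_adj_of_lt hjk (hki.trans hπij)).symm
    (permGraph_adj_of_lt (hjk.trans hkl) (hπli.trans hπij)) hij.ne hkl.ne
    (permGraph_adj_of_lt (hij.trans hjk |>.trans hkl) hπli)

lemma contains321_or_contains3412_of_adj {b x y c : Fin n} (adjbx : (permGraph π).Adj b x)
    (adjby : (permGraph π).Adj b y) (adjxc : (permGraph π).Adj x c) (hxy : x < y) (hcb : c ≠ b)
    (hπx : π b < π x) (hπy : π b < π y) (hπc : π b < π c) : Contains321 π ∨ Contains3412 π := by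
  have hxb : x < b := (permGraph_adj_lt_iff adjbx.symm).2 hπx
  have hyb : y < b := (permGraph_adj_lt_iff adjby.symm).2 hπy
  rcases (π.injective.ne hxy.ne).lt_or_gt with hπxy | hπyx
  · rcases adjxc.ne.lt_or_gt with hxc | hcx
    · have hπcx := (permGraph_adj_lt_iff adjxc).1 hxc
      rcases hcb.lt_or_gt with hcb | hbc
      · exact .inl ⟨x, c, b, hxc, hcb, hπc, hπcx⟩
      · exact .inr ⟨x, y, b, c, hxy, hyb, hbc, hπc, hπcx, hπxy⟩
    · exact .inl ⟨c, x, b, hcx, hxb, hπx, (permGraph_adj_lt_iff adjxc.symm).1 hcx⟩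
  · exact .inl ⟨x, y, b, hxy, hyb, hπy, hπyx⟩

lemma contains321_or_contains3412_of_isCycle {b : Fin n} {p : (permGraph π).Walk b b}
    (hp : p.IsCycle) (hmin : ∀ w ∈ p.support, π b ≤ π w) : Contains321 π ∨ Contains3412 π := by
  wlog hsnd : p.snd < p.penultimate generalizing p
  · refine this hp.reverse (by simpa using hmin) ?_
    rw [Walk.snd_reverse, Walk.penultimate_reverse]
    exact hp.snd_ne_penultimate.lt_or_gt.resolve_left hsnd
  have h3 := hp.three_le_length
  have hlt : ∀ i, 0 < i → i < p.length → π b < π (p.getVert i) := fun i hi0 hi =>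
    (hmin _ (p.getVert_mem_support i)).lt_of_ne <| π.injective.ne fun h =>
      by have := (hp.getVert_endpoint_iff hi.le).1 h.symm; omega
  exact contains321_or_contains3412_of_adj (p.adj_snd hp.not_nil)
    (p.adj_penultimate hp.not_nil).symm (p.adj_getVert_succ (i := 1) (by omega)) hsnd
    (fun h => by have := (hp.getVert_endpoint_iff (i := 2) (by omega)).1 h; omega)
    (hlt 1 (by omega) (by omega)) (hlt _ (by omega) (by omega)) (hlt 2 (by omega) (by omega))

lemma isForestPerm_of_not_contains321_of_not_contains3412 (h321 : ¬Contains321 π)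
    (h3412 : ¬Contains3412 π) : IsForestPerm π := by
  intro v p hp
  obtain ⟨b, hb, hmin⟩ := Set.exists_min_image {w | w ∈ p.support} π (Set.toFinite _)
    ⟨v, p.start_mem_support⟩
  refine (contains321_or_contains3412_of_isCycle (hp.rotate hb) fun w hw => ?_).elim h321 h3412
  exact hmin w ((p.mem_support_rotate_iff b hb).1 hw)

end

/-- A permutation of `[n]` is a forest permutation if and only if it avoids the patterns
321 and 3412. -/
theorem forestPerm_iff_avoids_321_and_3412 (n : ℕ) (π : Equiv.Perm (Fin n)) :
    IsForestPerm π ↔ occ perm321 π = 0 ∧ occ perm3412 π = 0 := by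
  rw [(occ_perm321_ne_zero_iff π).not_right, (occ_perm3412_ne_zero_iff π).not_right]
  exact ⟨fun h => ⟨fun h321 => h321.not_isForestPerm h, fun h3412 => h3412.not_isForestPerm h⟩,
    fun h => isForestPerm_of_not_contains321_of_not_contains3412 h.1 h.2⟩
end

section
/- Let π be a forest permutation of length n. Then every index i∈[n] is a left-to-right maximum of π or a right-to-left minimum of π (possibly both); moreover, i is both a left-to-right maximum and a right-to-left minimum if and only if i is an isolated vertex of the permutation graph G_π, i.e., i is involved in no inversion of π. -/
/-- `i` is a left-to-right maximum of `π`: `π j < π i` for all `j < i`. -/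
def IsLtrMax {n : ℕ} (π : Equiv.Perm (Fin n)) (i : Fin n) : Prop :=
  ∀ j : Fin n, j < i → π j < π i

/-- `i` is a right-to-left minimum of `π`: `π i < π j` for all `j > i`. -/
def IsRtlMin {n : ℕ} (π : Equiv.Perm (Fin n)) (i : Fin n) : Prop :=
  ∀ j : Fin n, i < j → π i < π j

/-!
An index `i` that is neither a left-to-right maximum nor a right-to-left minimum has an inversion
partner `a < i` with `π a > π i` and another one `b > i` with `π b < π i`; then `(a, b)` is an
inversion as well, so `a`, `i`, `b` span a triangle in `G_π`. Being both means having no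
inversion partner on either side, i.e. being isolated.
-/

lemma SimpleGraph.IsAcyclic.not_adj_of_adj_of_adj_s2 {V : Type*} {G : SimpleGraph V}
    (hG : G.IsAcyclic) {a b c : V} (hab : G.Adj a b) (hbc : G.Adj b c) : ¬ G.Adj a c := by
  classical
  exact fun hac => hG.cliqueFree le_rfl {a, b, c} (is3Clique_triple_iff.mpr ⟨hab, hac, hbc⟩)

section

variable {n : ℕ} {π : Equiv.Perm (Fin n)} {i j : Fin n}

lemma permGraph_adj_iff_of_lt (hji : j < i) : (permGraph π).Adj i j ↔ π i < π j := by
  simp [permGraph, hji, hji.not_gt]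

lemma isLtrMax_iff_forall_not_adj : IsLtrMax π i ↔ ∀ j < i, ¬ (permGraph π).Adj i j := by
  refine forall₂_congr fun j hji => ?_
  rw [permGraph_adj_iff_of_lt hji, not_lt, le_iff_lt_or_eq, or_iff_left]
  exact fun h => hji.ne (π.injective h)

lemma isRtlMin_iff_forall_not_adj :
    IsRtlMin π i ↔ ∀ j, i < j → ¬ (permGraph π).Adj i j := by
  refine forall₂_congr fun j hij => ?_
  rw [(permGraph π).adj_comm, permGraph_adj_iff_of_lt hij, not_lt, le_iff_lt_or_eq,
    or_iff_left]
  exact fun h => hij.ne (π.injective h)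

lemma isLtrMax_and_isRtlMin_iff :
    IsLtrMax π i ∧ IsRtlMin π i ↔ ∀ j, ¬ (permGraph π).Adj i j := by
  rw [isLtrMax_iff_forall_not_adj, isRtlMin_iff_forall_not_adj]
  refine ⟨fun ⟨hL, hR⟩ j => ?_, fun h => ⟨fun j _ => h j, fun j _ => h j⟩⟩
  rcases lt_trichotomy j i with hji | rfl | hij
  · exact hL j hji
  · exact (permGraph π).loopless.irrefl j
  · exact hR j hij

lemma IsForestPerm.isLtrMax_or_isRtlMin (hπ : IsForestPerm π) (i : Fin n) :
    IsLtrMax π i ∨ IsRtlMin π i := by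
  by_contra! h
  simp only [isLtrMax_iff_forall_not_adj, isRtlMin_iff_forall_not_adj, not_forall,
    not_not] at h
  obtain ⟨⟨a, hai, hadj_a⟩, ⟨b, hib, hadj_b⟩⟩ := h
  have hπa : π i < π a := (permGraph_adj_iff_of_lt hai).mp hadj_a
  have hπb : π b < π i := (permGraph_adj_iff_of_lt hib).mp hadj_b.symm
  have hba : (permGraph π).Adj b a :=
    (permGraph_adj_iff_of_lt (hai.trans hib)).mpr (hπb.trans hπa)
  exact hπ.not_adj_of_adj_of_adj_s2 hadj_a.symm hadj_b hba.symm

end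

/-- In a forest permutation, every index is a left-to-right maximum or a right-to-left minimum
(possibly both); it is both if and only if it is an isolated vertex of the permutation graph,
i.e. it is involved in no inversion. -/
theorem forestPerm_ltrMax_or_rtlMin (n : ℕ) (π : Equiv.Perm (Fin n))
    (hπ : IsForestPerm π) (i : Fin n) :
    (IsLtrMax π i ∨ IsRtlMin π i) ∧
    ((IsLtrMax π i ∧ IsRtlMin π i) ↔ ∀ j : Fin n, ¬ (permGraph π).Adj i j) :=
  ⟨hπ.isLtrMax_or_isRtlMin i, isLtrMax_and_isRtlMin_iff⟩
end

section
/- Let f_n denote the number of forest permutations of length n, with the convention f_0 = 1. Then f_1 = 1 and f_n = 3·f_{n−1} − f_{n−2} for every n≥2. -/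
/-- `f n`: the number of forest permutations of length `n` (note that `f 0 = 1`, since the
empty permutation is vacuously a forest permutation). -/
noncomputable def numForestPerms (n : ℕ) : ℕ :=
  Set.ncard {π : Equiv.Perm (Fin n) | IsForestPerm π}

namespace SimpleGraph

variable {V W : Type*} {G : SimpleGraph V} {H : SimpleGraph W}

theorem Walk.IsCycle.exists_adj_ne {u v : V} {c : G.Walk u u} (hc : c.IsCycle)
    (hv : v ∈ c.support) :
    ∃ a b, a ≠ b ∧ G.Adj v a ∧ G.Adj v b ∧ a ∈ c.support ∧ b ∈ c.support := by
  obtain ⟨a, b, hab, hnbr⟩ := Set.ncard_eq_two.mp (hc.ncard_neighborSet_toSubgraph_eq_two hv)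
  have ha : c.toSubgraph.Adj v a := by simp [← Subgraph.mem_neighborSet, hnbr]
  have hb : c.toSubgraph.Adj v b := by simp [← Subgraph.mem_neighborSet, hnbr]
  exact ⟨a, b, hab, ha.adj_sub, hb.adj_sub, by simpa using ha.snd_mem, by simpa using hb.snd_mem⟩

theorem IsAcyclic.exists_mem_support_notMem_range (f : G ↪g H) (hG : G.IsAcyclic) {u : W}
    {c : H.Walk u u} (hc : c.IsCycle) : ∃ x ∈ c.support, x ∉ Set.range f := by
  by_contra! hrange
  have hcyc : (c.induce _ hrange).IsCycle :=
    .of_map (f := (Embedding.induce _).toHom) (by rwa [Walk.map_induce])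
  exact f.isoInduceRange.isAcyclic_iff.mp hG _ hcyc

theorem IsAcyclic.eq_of_adj_of_adj (hG : G.IsAcyclic) {a b c d : V} (hac : a ≠ c)
    (hab : G.Adj a b) (hbc : G.Adj b c) (had : G.Adj a d) (hdc : G.Adj d c) : b = d := by
  let p : G.Path a c := ⟨.cons hab (.cons hbc .nil), by simp [hab.ne, hbc.ne, hac]⟩
  let q : G.Path a c := ⟨.cons had (.cons hdc .nil), by simp [had.ne, hdc.ne, hac]⟩
  have hpq : p.1 = q.1 := congrArg Subtype.val ((hG.subsingleton_path a c).elim p q)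
  simpa [p, q] using congrArg (·.getVert 1) hpq

end SimpleGraph

open Equiv Finset SimpleGraph

variable {m : ℕ}

def consPerm (k : Fin (m + 1)) (q : Perm (Fin m)) : Perm (Fin (m + 1)) :=
  (finSuccEquiv' 0).trans (q.optionCongr.trans (finSuccEquiv' k).symm)

@[simp] lemma consPerm_zero (k : Fin (m + 1)) (q : Perm (Fin m)) : consPerm k q 0 = k := by
  simp [consPerm, finSuccEquiv'_symm_none]

@[simp] lemma consPerm_succ (k : Fin (m + 1)) (q : Perm (Fin m)) (j : Fin m) :
    consPerm k q j.succ = k.succAbove (q j) := by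
  have h0 : finSuccEquiv' (0 : Fin (m + 1)) j.succ = some j := by
    rw [← Fin.zero_succAbove j, finSuccEquiv'_succAbove]
  simp [consPerm, h0, finSuccEquiv'_symm_some]

lemma consPerm_injective :
    Function.Injective fun x : Fin (m + 1) × Perm (Fin m) ↦ consPerm x.1 x.2 := by
  rintro ⟨k, q⟩ ⟨k', q'⟩ h
  have hk : k = k' := by simpa using congrArg (· 0) h
  subst hk
  refine Prod.ext rfl (Equiv.ext fun j ↦ ?_)
  simpa using congrArg (· j.succ) h

noncomputable def consPermEquiv : Fin (m + 1) × Perm (Fin m) ≃ Perm (Fin (m + 1)) :=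
  .ofBijective _ <| (Fintype.bijective_iff_injective_and_card _).mpr
    ⟨consPerm_injective, by simp [Fintype.card_perm, Nat.factorial_succ]⟩

lemma card_filter_perm_succ (P : Perm (Fin (m + 1)) → Prop) [DecidablePred P] :
    #{π | P π} = ∑ k, #{q | P (consPerm k q)} := by
  rw [← card_equiv consPermEquiv (s := {x | P (consPerm x.1 x.2)})
    fun x ↦ by simp [consPermEquiv]]
  simp only [card_filter, Fintype.sum_prod_type]

lemma permGraph_consPerm_adj_succ_succ (k : Fin (m + 1)) (q : Perm (Fin m)) (i j : Fin m) :
    (permGraph (consPerm k q)).Adj i.succ j.succ ↔ (permGraph q).Adj i j := by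
  simp only [permGraph, consPerm_succ, Fin.succ_lt_succ_iff, Fin.succAbove_lt_succAbove_iff]

lemma permGraph_consPerm_adj_zero_succ (k : Fin (m + 1)) (q : Perm (Fin m)) (j : Fin m) :
    (permGraph (consPerm k q)).Adj 0 j.succ ↔ (q j : ℕ) < k := by
  simp only [permGraph, consPerm_zero, consPerm_succ, Fin.succ_pos, true_and,
    Fin.succAbove_lt_iff_castSucc_lt, Fin.not_lt_zero, false_and, or_false]
  simp [Fin.lt_def]

def permGraphSuccEmbedding (k : Fin (m + 1)) (q : Perm (Fin m)) :
    permGraph q ↪g permGraph (consPerm k q) :=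
  ⟨Fin.succEmb m, permGraph_consPerm_adj_succ_succ k q _ _⟩

def FixesBelow (q : Perm (Fin m)) (r : ℕ) : Prop :=
  ∀ j : Fin m, (j : ℕ) < r → q j = j

variable {k : Fin (m + 1)} {q : Perm (Fin m)}

lemma fixesBelow_zero : FixesBelow q 0 := fun _ h ↦ absurd h (Nat.not_lt_zero _)

lemma IsForestPerm.of_consPerm (hp : IsForestPerm (consPerm k q)) : IsForestPerm q :=
  IsAcyclic.embedding (permGraphSuccEmbedding k q) hp

lemma IsForestPerm.strictMonoOn_of_consPerm (hp : IsForestPerm (consPerm k q)) :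
    StrictMonoOn q {i | (q i : ℕ) < k} := by
  intro i hi j hj hij
  by_contra! hji
  have hlt : q j < q i := lt_of_le_of_ne hji (q.injective.ne hij.ne')
  refine hp.cliqueFree le_rfl {0, i.succ, j.succ} (is3Clique_triple_iff.mpr ⟨?_, ?_, ?_⟩)
  · exact (permGraph_consPerm_adj_zero_succ k q i).mpr hi
  · exact (permGraph_consPerm_adj_zero_succ k q j).mpr hj
  · exact (permGraph_consPerm_adj_succ_succ k q i j).mpr (.inl ⟨hij, hlt⟩)

lemma IsForestPerm.val_lt_of_consPerm (hp : IsForestPerm (consPerm k q)) {j : Fin m}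
    (hj : (j : ℕ) + 1 < k) : (q j : ℕ) < k := by
  by_contra! hkj
  have hadj : ∀ i, j < i → (q i : ℕ) < k → (permGraph (consPerm k q)).Adj i.succ j.succ :=
    fun i hji hi ↦ (permGraph_consPerm_adj_succ_succ k q i j).mpr
      (.inr ⟨hji, by rw [Fin.lt_def]; omega⟩)
  have hafter : #{i | j < i ∧ (q i : ℕ) < k} ≤ 1 := by
    refine card_le_one.mpr fun i hi i' hi' ↦ ?_
    simp only [mem_filter, mem_univ, true_and] at hi hi'
    refine Fin.succ_injective _ (hp.eq_of_adj_of_adj (Fin.succ_ne_zero j).symm ?_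
      (hadj i hi.1 hi.2) ?_ (hadj i' hi'.1 hi'.2))
    · exact (permGraph_consPerm_adj_zero_succ k q i).mpr hi.2
    · exact (permGraph_consPerm_adj_zero_succ k q i').mpr hi'.2
  have hsmall : #{i | (q i : ℕ) < k} = k := by
    rw [card_equiv q (t := ({v | (v : ℕ) < k} : Finset (Fin m))) (by simp),
      Fin.card_filter_val_lt]
    exact min_eq_right (Nat.lt_succ_iff.mp k.isLt)
  have hsub : ({i | (q i : ℕ) < k} : Finset (Fin m)) ⊆
      Iio j ∪ ({i | j < i ∧ (q i : ℕ) < k} : Finset (Fin m)) := by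
    intro i hi
    simp only [mem_filter, mem_univ, true_and, mem_union, mem_Iio] at hi ⊢
    rcases lt_trichotomy i j with h | rfl | h
    · exact .inl h
    · omega
    · exact .inr ⟨h, hi⟩
  have := (card_le_card hsub).trans (card_union_le _ _)
  rw [hsmall, Fin.card_Iio] at this
  omega

lemma IsForestPerm.fixesBelow_of_consPerm (hp : IsForestPerm (consPerm k q)) :
    FixesBelow q (k - 1) := by
  intro j hj
  have hqj := hp.val_lt_of_consPerm (j := j) (by omega)
  have hbelow : ({i | q i < q j} : Finset (Fin m)) = Iio j := by
    ext i
    simp only [mem_filter, mem_univ, true_and, mem_Iio]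
    constructor
    · intro hij
      by_contra! hji
      rcases hji.lt_or_eq with h | rfl
      · exact (hp.strictMonoOn_of_consPerm hqj
        (show (q i : ℕ) < k by rw [Fin.lt_def] at hij; omega) h).not_gt hij
      · exact lt_irrefl _ hij
    · intro hij
      exact hp.strictMonoOn_of_consPerm
        (hp.val_lt_of_consPerm (by rw [Fin.lt_def] at hij; omega)) hqj hij
  apply Fin.ext
  calc (q j : ℕ) = #(Iio (q j)) := (Fin.card_Iio _).symm
    _ = #{i | q i < q j} := (card_equiv q (by simp)).symm
    _ = j := by rw [hbelow, Fin.card_Iio]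

lemma FixesBelow.not_adj {r : ℕ} (hq : FixesBelow q r) {i : Fin m} (hi : (i : ℕ) < r)
    (x : Fin m) : ¬ (permGraph q).Adj i x := by
  rintro (⟨hix, hlt⟩ | ⟨hxi, hlt⟩) <;> rw [hq i hi] at hlt
  · have hx : q x = x := q.injective (hq _ (by rw [Fin.lt_def] at hlt; omega))
    exact lt_asymm hix (hx ▸ hlt)
  · rw [hq x (by rw [Fin.lt_def] at hxi; omega)] at hlt
    exact lt_asymm hxi hlt

lemma FixesBelow.eq_zero_of_consPerm_adj {r : ℕ} (hq : FixesBelow q r) {i : Fin m}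
    (hi : (i : ℕ) < r) {x : Fin (m + 1)} (hx : (permGraph (consPerm k q)).Adj i.succ x) :
    x = 0 := by
  by_contra hx0
  obtain ⟨j, rfl⟩ := Fin.exists_succ_eq.mpr hx0
  exact hq.not_adj hi j ((permGraph_consPerm_adj_succ_succ k q i j).mp hx)

theorem isForestPerm_consPerm (hq : IsForestPerm q) (hfix : FixesBelow q (k - 1)) :
    IsForestPerm (consPerm k q) := by
  intro v c hc
  have hleaf : ∀ i : Fin m, (i : ℕ) < k - 1 → i.succ ∉ c.support := by
    intro i hi hmem
    obtain ⟨a, b, hab, ha, hb, -, -⟩ := hc.exists_adj_ne hmem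
    exact hab ((hfix.eq_zero_of_consPerm_adj hi ha).trans
      (hfix.eq_zero_of_consPerm_adj hi hb).symm)
  have hnbr : ∀ a ∈ c.support, (permGraph (consPerm k q)).Adj 0 a →
      ∃ i : Fin m, a = i.succ ∧ (q i : ℕ) = k - 1 := by
    intro a ha hadj
    obtain ⟨i, rfl⟩ := Fin.exists_succ_eq.mpr hadj.ne'
    have hlt := (permGraph_consPerm_adj_zero_succ k q i).mp hadj
    refine ⟨i, rfl, ?_⟩
    by_contra hne
    have hqi : q i = i := q.injective (hfix _ (by omega))
    exact hleaf i (by rw [← hqi]; omega) ha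
  obtain ⟨x, hx, hx0⟩ := hq.exists_mem_support_notMem_range (permGraphSuccEmbedding k q) hc
  obtain rfl : x = 0 := by
    by_contra hne
    exact hx0 ((Fin.exists_succ_eq.mpr hne).imp fun _ ↦ id)
  obtain ⟨a, b, hab, ha, hb, haS, hbS⟩ := hc.exists_adj_ne hx
  obtain ⟨i, rfl, hi⟩ := hnbr a haS ha
  obtain ⟨i', rfl, hi'⟩ := hnbr b hbS hb
  exact hab (congrArg Fin.succ (q.injective (Fin.ext (hi.trans hi'.symm))))

theorem isForestPerm_consPerm_iff :
    IsForestPerm (consPerm k q) ↔ IsForestPerm q ∧ FixesBelow q (k - 1) :=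
  ⟨fun hp ↦ ⟨hp.of_consPerm, hp.fixesBelow_of_consPerm⟩, fun h ↦ isForestPerm_consPerm h.1 h.2⟩

lemma fixesBelow_consPerm_zero_iff {r : ℕ} :
    FixesBelow (consPerm 0 q) (r + 1) ↔ FixesBelow q r := by
  constructor
  · intro h j hj
    simpa using h j.succ (by simpa using hj)
  · intro h j hj
    cases j using Fin.cases with
    | zero => simp
    | succ j => simp [h j (by simpa using hj)]

section Counting

open scoped Classical

lemma numForestPerms_eq_card (n : ℕ) :
    numForestPerms n = #{π : Perm (Fin n) | IsForestPerm π} := by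
  rw [numForestPerms, Set.ncard_eq_toFinset_card', Set.toFinset_ofPred]

lemma numForestPerms_of_le_one {n : ℕ} (hn : n ≤ 1) : numForestPerms n = 1 := by
  have : Subsingleton (Fin n) := Fin.subsingleton_iff_le_one.mpr hn
  have hforest (π : Perm (Fin n)) : IsForestPerm π := IsAcyclic.of_subsingleton
  rw [numForestPerms_eq_card, filter_true_of_mem fun π _ ↦ hforest π, card_univ,
    Fintype.card_perm, Fintype.card_fin]
  interval_cases n <;> rfl

noncomputable def numForestPermsFixingBelow (m r : ℕ) : ℕ :=
  #{q : Perm (Fin m) | IsForestPerm q ∧ FixesBelow q r}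

lemma numForestPermsFixingBelow_zero (m : ℕ) :
    numForestPermsFixingBelow m 0 = numForestPerms m := by
  simp [numForestPermsFixingBelow, fixesBelow_zero, numForestPerms_eq_card]

lemma numForestPermsFixingBelow_succ_succ (m r : ℕ) :
    numForestPermsFixingBelow (m + 1) (r + 1) = numForestPermsFixingBelow m r := by
  rw [numForestPermsFixingBelow, card_filter_perm_succ, Fin.sum_univ_succ,
    sum_eq_zero fun k _ ↦ ?_, add_zero]
  · simp only [isForestPerm_consPerm_iff, fixesBelow_consPerm_zero_iff, Fin.val_zero,
      Nat.zero_sub, fixesBelow_zero, and_true, numForestPermsFixingBelow]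
  · refine card_eq_zero.mpr (filter_eq_empty_iff.mpr fun q _ ⟨_, hfix⟩ ↦ ?_)
    exact Fin.succ_ne_zero k (by simpa using hfix 0 r.succ_pos)

lemma numForestPermsFixingBelow_eq {m r : ℕ} (h : r ≤ m) :
    numForestPermsFixingBelow m r = numForestPerms (m - r) := by
  induction r generalizing m with
  | zero => exact numForestPermsFixingBelow_zero m
  | succ r ih =>
    obtain ⟨m, rfl⟩ : ∃ m', m = m' + 1 := ⟨m - 1, by omega⟩
    rw [numForestPermsFixingBelow_succ_succ, ih (by omega), Nat.add_sub_add_right]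

lemma numForestPerms_succ_eq_sum (m : ℕ) :
    numForestPerms (m + 1) = ∑ k : Fin (m + 1), numForestPermsFixingBelow m (k - 1) := by
  simp only [numForestPerms_eq_card, card_filter_perm_succ, isForestPerm_consPerm_iff,
    numForestPermsFixingBelow]

end Counting

lemma numForestPerms_succ (m : ℕ) :
    numForestPerms (m + 1) = numForestPerms m + ∑ j ∈ range m, numForestPerms (j + 1) := by
  rw [numForestPerms_succ_eq_sum, Fin.sum_univ_succ, ← sum_range_reflect,
    ← Fin.sum_univ_eq_sum_range (fun j ↦ numForestPerms (m - 1 - j + 1))]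
  congr 1
  · exact numForestPermsFixingBelow_zero m
  · refine sum_congr rfl fun i _ ↦ ?_
    rw [Fin.val_succ, Nat.add_sub_cancel, numForestPermsFixingBelow_eq i.is_lt.le]
    congr 1
    omega

/-- With `f 0 = 1`, the numbers of forest permutations satisfy `f 1 = 1` and the recursion
`f n = 3 f (n-1) - f (n-2)` for all `n ≥ 2`. -/
theorem numForestPerms_recursion :
    numForestPerms 0 = 1 ∧ numForestPerms 1 = 1 ∧
    ∀ n : ℕ, 2 ≤ n →
      (numForestPerms n : ℤ) = 3 * numForestPerms (n - 1) - numForestPerms (n - 2) := by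
  refine ⟨numForestPerms_of_le_one zero_le_one, numForestPerms_of_le_one le_rfl, fun n hn ↦ ?_⟩
  obtain ⟨m, rfl⟩ : ∃ m, n = m + 1 + 1 := ⟨n - 2, by omega⟩
  have h₁ := numForestPerms_succ (m + 1)
  have h₀ := numForestPerms_succ m
  rw [sum_range_succ] at h₁
  rw [Nat.add_sub_cancel, show m + 1 + 1 - 2 = m by omega]
  omega
end

section
/- Let (Y_i)_{i≥1} be independent, identically distributed random variables taking values in the positive integers with E Y_1 < ∞. Let S_m = Σ_{i=1}^m Y_i, let N(n) = min{m ≥ 1 : S_m ≥ n}, and set Y_i := 0 for i ≤ 0. Then for all integers j ≥ 0, k ≥ 1 and n ≥ 1, P(Y_{N(n)−j} = k) ≤ (k + j·E Y_1)·P(Y_1 = k). Consequently, for every q > 0, E[Y_{N(n)−j}^q] ≤ E[Y_1^{q+1}] + j·(E Y_1)·E[Y_1^q]. -/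
/-!
Put `X i = Y (i + 1)`, let `S i = X 0 + ⋯ + X (i - 1)` and let `W i` be the sum of the `j`
variables following `X i`. If `Y (N(n) - j) = k ≥ 1`, then `i = N(n) - j - 1` satisfies `X i = k`
and `S i < n ≤ S i + k + W i`; the second event involves only variables other than `X i`, so
`P(Y (N(n) - j) = k) ≤ P(Y 1 = k) · ∑ᵢ P(S i < n ≤ S i + k + W i)`.
Since `W i` is independent of `S i` and distributed as `S j`, and the `S i` are pairwise distinct,
the sum is at most `∑_{s < n} P(n ≤ s + k + S j) ≤ k + E (S j) = k + j · E Y 1`.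
The moment bound follows by multiplying by `k ^ q` and summing over `k`.
-/

open MeasureTheory ProbabilityTheory Finset
open scoped ENNReal

namespace ProbabilityTheory

variable {Ω : Type*} [MeasurableSpace Ω] {μ : Measure Ω}

theorem iIndepFun.indepFun_of_dependsOn {ι E β γ : Type*} [MeasurableSpace E] [Countable E]
    [MeasurableSingletonClass E] [MeasurableSpace β] [MeasurableSpace γ] [Nonempty β] [Nonempty γ]
    {X : ι → Ω → E} (hind : iIndepFun X μ) (hX : ∀ i, Measurable (X i)) {s t : Finset ι}
    (hst : Disjoint s t) {F : (ι → E) → β} {G : (ι → E) → γ} (hF : DependsOn F s)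
    (hG : DependsOn G t) :
    IndepFun (fun ω ↦ F (X · ω)) (fun ω ↦ G (X · ω)) μ := by
  obtain ⟨F', rfl⟩ := dependsOn_iff_exists_comp.1 hF
  obtain ⟨G', rfl⟩ := dependsOn_iff_exists_comp.1 hG
  exact (hind.indepFun_finset s t hst hX).comp (measurable_of_countable F')
    (measurable_of_countable G')

theorem iIndepFun.identDistrib_shift {E : Type*} [MeasurableSpace E] {X : ℕ → Ω → E}
    (hind : iIndepFun X μ) (hX : ∀ i, Measurable (X i)) (hid : ∀ i, μ.map (X i) = μ.map (X 0))
    (i : ℕ) : IdentDistrib (fun ω l ↦ X (i + l) ω) (fun ω l ↦ X l ω) μ μ where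
  aemeasurable_fst := (measurable_pi_lambda _ fun l ↦ hX (i + l)).aemeasurable
  aemeasurable_snd := (measurable_pi_lambda _ hX).aemeasurable
  map_eq := by
    rw [(hind.precomp (add_right_injective i)).map_fun_eq_infinitePi_map fun l ↦ hX (i + l),
      hind.map_fun_eq_infinitePi_map hX]
    simp only [hid]

theorem IndepFun.measure_preimage_prodMk [IsFiniteMeasure μ] {α β : Type*} [MeasurableSpace α]
    [MeasurableSpace β] {f : Ω → α} {g : Ω → β} (h : IndepFun f g μ) (hf : Measurable f)
    (hg : Measurable g) {D : Set (α × β)} (hD : MeasurableSet D) :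
    μ ((fun ω ↦ (f ω, g ω)) ⁻¹' D) = ∫⁻ ω, μ.map g (Prod.mk (f ω) ⁻¹' D) ∂μ := by
  rw [← Measure.map_apply (hf.prodMk hg) hD,
    (indepFun_iff_map_prod_eq_prod_map_map hf.aemeasurable hg.aemeasurable).1 h,
    Measure.prod_apply hD, lintegral_map (measurable_measure_prodMk_left hD) hf]

end ProbabilityTheory

namespace Renewal

noncomputable def firstPassage (s : ℕ → ℕ) (n : ℕ) : ℕ := sInf {m | 1 ≤ m ∧ n ≤ s m}

theorem firstPassage_eq_succ_iff {s : ℕ → ℕ} (hs : Monotone s) {n : ℕ} (hn : s 0 < n) (m : ℕ) :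
    firstPassage s n = m + 1 ↔ s m < n ∧ n ≤ s (m + 1) := by
  have hset : {m | 1 ≤ m ∧ n ≤ s m} = {m | n ≤ s m} := by
    ext (_ | m) <;> simp; omega
  rw [firstPassage, hset, Nat.sInf_upward_closed_eq_succ_iff fun a b hab ha ↦ ha.trans (hs hab)]
  simp [and_comm]

theorem exists_eq_add_of_apply_sub_eq {α : Type*} {Y : ℕ → α} {N j : ℕ} {a : α} (h0 : Y 0 ≠ a)
    (h : Y (N - j) = a) : ∃ i, N = i + 1 + j ∧ Y (i + 1) = a := by
  have hj : j < N := by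
    by_contra
    rw [Nat.sub_eq_zero_of_le (by omega)] at h
    exact h0 h
  exact ⟨N - j - 1, by omega, by rwa [show N - j - 1 + 1 = N - j by omega]⟩

theorem measurable_firstPassage {Ω : Type*} [MeasurableSpace Ω] {S : ℕ → Ω → ℕ}
    (hS : ∀ m, Measurable (S m)) {n : ℕ} (hreach : ∀ ω, ∃ m, 1 ≤ m ∧ n ≤ S m ω) :
    Measurable fun ω ↦ firstPassage (S · ω) n := by
  classical
  convert measurable_find hreach fun m ↦ ?_ using 2 with ω
  · convert Nat.sInf_def (hreach ω) <;> rfl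
  · exact hS m (.of_discrete (s := {x | 1 ≤ m ∧ n ≤ x}))

def overshootSet (n k : ℕ) : Set (ℕ × ℕ) := {p | p.1 < n ∧ n ≤ p.1 + k + p.2}

theorem tsum_indicator_overshootSet_le (n k w : ℕ) :
    ∑' s, (Prod.mk s ⁻¹' overshootSet n k).indicator (1 : ℕ → ℝ≥0∞) w ≤ k + w := by
  classical
  have hsupp : ∀ s ∉ range n, (Prod.mk s ⁻¹' overshootSet n k).indicator (1 : ℕ → ℝ≥0∞) w = 0 :=
    fun s hs ↦ Set.indicator_of_notMem (by simp_all [overshootSet]) _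
  have hsub : (range n).filter (fun s ↦ n ≤ s + k + w) ⊆ Ico (n - (k + w)) n := by
    intro s; simp; omega
  calc ∑' s, (Prod.mk s ⁻¹' overshootSet n k).indicator (1 : ℕ → ℝ≥0∞) w
      = ((range n).filter (fun s ↦ n ≤ s + k + w)).card := by
        rw [tsum_eq_sum hsupp, ← sum_boole]
        refine sum_congr rfl fun s hs ↦ ?_
        simp_all [overshootSet, Set.indicator_apply]
    _ ≤ k + w := by
        have := (card_le_card hsub).trans_eq (Nat.card_Ico _ _)
        exact_mod_cast this.trans (by omega)

theorem tsum_measure_slice_overshootSet_le (ν : Measure ℕ) [IsProbabilityMeasure ν] (n k : ℕ) :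
    ∑' s, ν (Prod.mk s ⁻¹' overshootSet n k) ≤ k + ∫⁻ w, (w : ℝ≥0∞) ∂ν := by
  calc ∑' s, ν (Prod.mk s ⁻¹' overshootSet n k)
      = ∫⁻ w, ∑' s, (Prod.mk s ⁻¹' overshootSet n k).indicator 1 w ∂ν := by
        rw [lintegral_tsum fun s ↦ measurable_from_nat.aemeasurable]
        simp_rw [lintegral_indicator_one (MeasurableSet.of_discrete)]
    _ ≤ ∫⁻ w, (k + w : ℝ≥0∞) ∂ν := lintegral_mono fun w ↦ tsum_indicator_overshootSet_le n k w
    _ = k + ∫⁻ w, (w : ℝ≥0∞) ∂ν := by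
        rw [lintegral_add_left measurable_const, lintegral_const, measure_univ, mul_one]

section PartialSums

variable {Ω : Type*} {X : ℕ → Ω → ℕ}

def partialSum (X : ℕ → Ω → ℕ) (m : ℕ) (ω : Ω) : ℕ := ∑ l ∈ range m, X l ω

def windowSum (X : ℕ → Ω → ℕ) (i j : ℕ) (ω : Ω) : ℕ := ∑ l ∈ range j, X (i + l) ω

theorem partialSum_add_windowSum (i j : ℕ) (ω : Ω) :
    partialSum X (i + 1 + j) ω = partialSum X i ω + X i ω + windowSum X (i + 1) j ω := by
  rw [partialSum, sum_range_add, sum_range_succ]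
  rfl

theorem partialSum_succ_eq_sum_Icc (Y : ℕ → Ω → ℕ) (m : ℕ) (ω : Ω) :
    partialSum (fun i ↦ Y (i + 1)) m ω = ∑ i ∈ Icc 1 m, Y i ω := by
  rw [partialSum, range_eq_Ico, sum_Ico_add' fun i ↦ Y i ω, zero_add, Ico_add_one_right_eq_Icc]

theorem strictMono_partialSum (hpos : ∀ i ω, 1 ≤ X i ω) (ω : Ω) :
    StrictMono (partialSum X · ω) :=
  strictMono_nat_of_lt_succ fun i ↦ by
    have := hpos i ω
    simp only [partialSum, sum_range_succ]
    omega

variable [MeasurableSpace Ω] {μ : Measure Ω}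

theorem measurable_partialSum (hX : ∀ i, Measurable (X i)) (m : ℕ) :
    Measurable (partialSum X m) :=
  Finset.measurable_sum _ fun l _ ↦ hX l

theorem measurable_windowSum (hX : ∀ i, Measurable (X i)) (i j : ℕ) :
    Measurable (windowSum X i j) :=
  Finset.measurable_sum _ fun l _ ↦ hX (i + l)

theorem measurable_firstPassage_partialSum (hX : ∀ i, Measurable (X i))
    (hpos : ∀ i ω, 1 ≤ X i ω) {n : ℕ} (hn : 1 ≤ n) :
    Measurable fun ω ↦ firstPassage (partialSum X · ω) n :=
  measurable_firstPassage (measurable_partialSum hX)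
    fun ω ↦ ⟨n, hn, (strictMono_partialSum hpos ω).id_le n⟩

theorem lintegral_partialSum (hX : ∀ i, Measurable (X i)) (hid : ∀ i, μ.map (X i) = μ.map (X 0))
    (j : ℕ) : ∫⁻ ω, (partialSum X j ω : ℝ≥0∞) ∂μ = j * ∫⁻ ω, (X 0 ω : ℝ≥0∞) ∂μ := by
  have hmean (l : ℕ) : ∫⁻ ω, (X l ω : ℝ≥0∞) ∂μ = ∫⁻ ω, (X 0 ω : ℝ≥0∞) ∂μ := by
    rw [← lintegral_map measurable_from_nat (hX l), hid, lintegral_map measurable_from_nat (hX 0)]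
  simp only [partialSum, Nat.cast_sum]
  rw [lintegral_finsetSum (f := fun l ω ↦ (X l ω : ℝ≥0∞)) _
    fun l _ ↦ measurable_from_nat.comp (hX l)]
  simp [hmean]

theorem indepFun_partialSum_windowSum (hX : ∀ i, Measurable (X i)) (hind : iIndepFun X μ)
    (i j : ℕ) : IndepFun (partialSum X i) (windowSum X (i + 1) j) μ :=
  hind.indepFun_of_dependsOn hX (s := range i) (t := Ico (i + 1) (i + 1 + j))
    (F := fun v ↦ ∑ l ∈ range i, v l) (G := fun v ↦ ∑ l ∈ range j, v (i + 1 + l))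
    (disjoint_left.2 fun l hl hl' ↦ by simp at hl hl'; omega)
    (fun v w h ↦ sum_congr rfl fun l hl ↦ h l (by simpa using hl))
    (fun v w h ↦ sum_congr rfl fun l hl ↦ h (i + 1 + l) (by simp at hl ⊢; omega))

theorem indepFun_self_partialSum_windowSum (hX : ∀ i, Measurable (X i)) (hind : iIndepFun X μ)
    (i j : ℕ) : IndepFun (X i) (fun ω ↦ (partialSum X i ω, windowSum X (i + 1) j ω)) μ := by
  refine hind.indepFun_of_dependsOn hX (s := {i}) (t := (range (i + 1 + j)).erase i)
    (F := fun v ↦ v i) (G := fun v ↦ (∑ l ∈ range i, v l, ∑ l ∈ range j, v (i + 1 + l)))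
    (by simp) (fun v w h ↦ h i (by simp)) fun v w h ↦ ?_
  simp only [Prod.mk.injEq]
  refine ⟨sum_congr rfl fun l hl ↦ h l ?_, sum_congr rfl fun l hl ↦ h (i + 1 + l) ?_⟩ <;>
    simp at hl ⊢ <;> omega

theorem identDistrib_windowSum (hX : ∀ i, Measurable (X i)) (hind : iIndepFun X μ)
    (hid : ∀ i, μ.map (X i) = μ.map (X 0)) (i j : ℕ) :
    IdentDistrib (windowSum X i j) (partialSum X j) μ μ :=
  (hind.identDistrib_shift hX hid i).comp
    (Finset.measurable_sum _ fun l _ ↦ measurable_pi_apply l)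

theorem tsum_measure_partialSum_windowSum_overshoot_le [IsProbabilityMeasure μ]
    (hX : ∀ i, Measurable (X i)) (hind : iIndepFun X μ) (hid : ∀ i, μ.map (X i) = μ.map (X 0))
    (hpos : ∀ i ω, 1 ≤ X i ω) (n k j : ℕ) :
    ∑' i, μ ((fun ω ↦ (partialSum X i ω, windowSum X (i + 1) j ω)) ⁻¹' overshootSet n k) ≤
      k + j * ∫⁻ ω, (X 0 ω : ℝ≥0∞) ∂μ := by
  set ν := μ.map (partialSum X j)
  have : IsProbabilityMeasure ν :=
    Measure.isProbabilityMeasure_map (measurable_partialSum hX j).aemeasurable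
  set g : ℕ → ℝ≥0∞ := fun s ↦ ν (Prod.mk s ⁻¹' overshootSet n k)
  have hC (i : ℕ) :
      μ ((fun ω ↦ (partialSum X i ω, windowSum X (i + 1) j ω)) ⁻¹' overshootSet n k) =
        ∫⁻ ω, g (partialSum X i ω) ∂μ := by
    rw [(indepFun_partialSum_windowSum hX hind i j).measure_preimage_prodMk
      (measurable_partialSum hX i) (measurable_windowSum hX _ j) (.of_discrete),
      (identDistrib_windowSum hX hind hid (i + 1) j).map_eq]
  calc ∑' i, μ ((fun ω ↦ (partialSum X i ω, windowSum X (i + 1) j ω)) ⁻¹' overshootSet n k)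
      = ∫⁻ ω, ∑' i, g (partialSum X i ω) ∂μ := by
        simp_rw [hC]
        rw [lintegral_tsum (f := fun i ω ↦ g (partialSum X i ω))
          fun i ↦ (measurable_from_nat (f := g) |>.comp (measurable_partialSum hX i)).aemeasurable]
    _ ≤ ∫⁻ _, ∑' s, g s ∂μ := lintegral_mono fun ω ↦
        ENNReal.tsum_comp_le_tsum_of_injective (strictMono_partialSum hpos ω).injective g
    _ = ∑' s, g s := by rw [lintegral_const, measure_univ, mul_one]
    _ ≤ k + ∫⁻ w, (w : ℝ≥0∞) ∂ν := tsum_measure_slice_overshootSet_le ν n k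
    _ = k + j * ∫⁻ ω, (X 0 ω : ℝ≥0∞) ∂μ := by
        rw [lintegral_map measurable_from_nat (measurable_partialSum hX j),
          lintegral_partialSum hX hid]

theorem measure_firstPassage_lag_le [IsProbabilityMeasure μ] (hX : ∀ i, Measurable (X i))
    (hind : iIndepFun X μ) (hid : ∀ i, μ.map (X i) = μ.map (X 0)) (hpos : ∀ i ω, 1 ≤ X i ω)
    {n : ℕ} (hn : 1 ≤ n) (j k : ℕ) :
    μ {ω | ∃ i, firstPassage (partialSum X · ω) n = i + 1 + j ∧ X i ω = k} ≤
      (k + j * ∫⁻ ω, (X 0 ω : ℝ≥0∞) ∂μ) * μ (X 0 ⁻¹' {k}) := by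
  set C : ℕ → Set Ω := fun i ↦
    (fun ω ↦ (partialSum X i ω, windowSum X (i + 1) j ω)) ⁻¹' overshootSet n k
  have hsub : {ω | ∃ i, firstPassage (partialSum X · ω) n = i + 1 + j ∧ X i ω = k} ⊆
      ⋃ i, X i ⁻¹' {k} ∩ C i := by
    rintro ω ⟨i, hN, rfl⟩
    rw [show i + 1 + j = i + j + 1 by omega, firstPassage_eq_succ_iff
      (strictMono_partialSum hpos ω).monotone (by simp [partialSum]; omega)] at hN
    have hsplit := partialSum_add_windowSum (X := X) i j ω
    have hmono := (strictMono_partialSum hpos ω).monotone (Nat.le_add_right i j)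
    refine Set.mem_iUnion.2 ⟨i, rfl, ?_⟩
    simp only [C, overshootSet, Set.mem_preimage, Set.mem_ofPred_eq]
    rw [show i + j + 1 = i + 1 + j by omega] at hN
    omega
  have hpmf (i : ℕ) : μ (X i ⁻¹' {k}) = μ (X 0 ⁻¹' {k}) := by
    rw [← Measure.map_apply (hX i) (.of_discrete), hid, Measure.map_apply (hX 0) (.of_discrete)]
  calc μ {ω | ∃ i, firstPassage (partialSum X · ω) n = i + 1 + j ∧ X i ω = k}
      ≤ ∑' i, μ (X i ⁻¹' {k} ∩ C i) := (measure_mono hsub).trans (measure_iUnion_le _)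
    _ = μ (X 0 ⁻¹' {k}) * ∑' i, μ (C i) := by
        rw [← ENNReal.tsum_mul_left]
        refine tsum_congr fun i ↦ ?_
        rw [(indepFun_self_partialSum_windowSum hX hind i j).measure_inter_preimage_eq_mul _ _
          (.of_discrete) (.of_discrete), hpmf]
    _ ≤ (k + j * ∫⁻ ω, (X 0 ω : ℝ≥0∞) ∂μ) * μ (X 0 ⁻¹' {k}) := by
        rw [mul_comm]
        gcongr
        exact tsum_measure_partialSum_windowSum_overshoot_le hX hind hid hpos n k j

end PartialSums

theorem measurable_apply_index {Ω β : Type*} [MeasurableSpace Ω] [MeasurableSpace β]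
    {Y : ℕ → Ω → β} (hY : ∀ i, Measurable (Y i)) {T : Ω → ℕ} (hT : Measurable T) :
    Measurable fun ω ↦ Y (T ω) ω :=
  (measurable_from_prod_countable_left (f := fun p : Ω × ℕ ↦ Y p.2 p.1) hY).comp
    (measurable_id.prodMk hT)

theorem lintegral_rpow_le_of_measure_preimage_le {Ω : Type*} [MeasurableSpace Ω] {μ : Measure Ω}
    {Z V : Ω → ℕ} (hZ : Measurable Z) (hV : Measurable V) {q : ℝ} (hq : 0 < q) {c : ℝ≥0∞}
    (h : ∀ b, 1 ≤ b → μ (Z ⁻¹' {b}) ≤ (b + c) * μ (V ⁻¹' {b})) :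
    ∫⁻ ω, (Z ω : ℝ≥0∞) ^ q ∂μ ≤
      ∫⁻ ω, (V ω : ℝ≥0∞) ^ (q + 1) ∂μ + c * ∫⁻ ω, (V ω : ℝ≥0∞) ^ q ∂μ := by
  have hsum {W : Ω → ℕ} (hW : Measurable W) (p : ℝ) :
      ∫⁻ ω, (W ω : ℝ≥0∞) ^ p ∂μ = ∑' b : ℕ, (b : ℝ≥0∞) ^ p * μ (W ⁻¹' {b}) := by
    rw [← lintegral_map (f := fun b : ℕ ↦ (b : ℝ≥0∞) ^ p) measurable_from_nat hW,
      lintegral_countable']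
    simp_rw [Measure.map_apply hW (.of_discrete)]
  rw [hsum hZ, hsum hV, hsum hV, ← ENNReal.tsum_mul_left, ← ENNReal.tsum_add]
  refine ENNReal.tsum_le_tsum fun b ↦ ?_
  rcases Nat.eq_zero_or_pos b with rfl | hb
  · simp [ENNReal.zero_rpow_of_pos hq]
  calc (b : ℝ≥0∞) ^ q * μ (Z ⁻¹' {b}) ≤ (b : ℝ≥0∞) ^ q * ((b + c) * μ (V ⁻¹' {b})) := by
        gcongr
        exact h b hb
    _ = (b : ℝ≥0∞) ^ (q + 1) * μ (V ⁻¹' {b}) + c * ((b : ℝ≥0∞) ^ q * μ (V ⁻¹' {b})) := by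
        rw [ENNReal.rpow_add q 1 (Nat.cast_ne_zero.2 hb.ne') (ENNReal.natCast_ne_top b),
          ENNReal.rpow_one]
        ring

end Renewal

open Renewal

theorem renewal_window_bound_general {Ω : Type*} [MeasurableSpace Ω]
    (μ : Measure Ω) [IsProbabilityMeasure μ]
    (Y : ℕ → Ω → ℕ)
    (hY0 : ∀ ω, Y 0 ω = 0)
    (hmeas : ∀ i, Measurable (Y i))
    (hpos : ∀ i, 1 ≤ i → ∀ ω, 1 ≤ Y i ω)
    (hindep : iIndepFun (fun i : ℕ => Y (i + 1)) μ)
    (hident : ∀ i, 1 ≤ i → Measure.map (Y i) μ = Measure.map (Y 1) μ) :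
    let S : ℕ → Ω → ℕ := fun m ω => ∑ i ∈ Finset.Icc 1 m, Y i ω
    let N : ℕ → Ω → ℕ := fun n ω => sInf {m | 1 ≤ m ∧ n ≤ S m ω}
    (∀ j k n : ℕ, 1 ≤ k → 1 ≤ n →
      μ {ω | Y (N n ω - j) ω = k} ≤
        ((k : ℝ≥0∞) + (j : ℝ≥0∞) * ∫⁻ ω, (Y 1 ω : ℝ≥0∞) ∂μ) * μ {ω | Y 1 ω = k}) ∧
    (∀ (q : ℝ), 0 < q → ∀ j n : ℕ, 1 ≤ n →
      (∫⁻ ω, (Y (N n ω - j) ω : ℝ≥0∞) ^ q ∂μ) ≤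
        (∫⁻ ω, (Y 1 ω : ℝ≥0∞) ^ (q + 1) ∂μ) +
          (j : ℝ≥0∞) * (∫⁻ ω, (Y 1 ω : ℝ≥0∞) ∂μ) * ∫⁻ ω, (Y 1 ω : ℝ≥0∞) ^ q ∂μ) := by
  intro S N
  set X : ℕ → Ω → ℕ := fun i ↦ Y (i + 1)
  have hX (i : ℕ) : Measurable (X i) := hmeas (i + 1)
  have hid (i : ℕ) : μ.map (X i) = μ.map (X 0) := hident (i + 1) (by omega)
  have hposX (i : ℕ) (ω : Ω) : 1 ≤ X i ω := hpos (i + 1) (by omega) ω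
  have hN (n : ℕ) (ω : Ω) : N n ω = firstPassage (partialSum X · ω) n := by
    simp only [N, S, firstPassage, ← partialSum_succ_eq_sum_Icc]
    rfl
  have hpmf (j k n : ℕ) (hk : 1 ≤ k) (hn : 1 ≤ n) :
      μ {ω | Y (N n ω - j) ω = k} ≤
        ((k : ℝ≥0∞) + j * ∫⁻ ω, (Y 1 ω : ℝ≥0∞) ∂μ) * μ {ω | Y 1 ω = k} := by
    refine (measure_mono fun ω (hω : Y (N n ω - j) ω = k) ↦ ?_).trans
      (measure_firstPassage_lag_le hX hindep hid hposX hn j k)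
    show ∃ i, _ ∧ _
    rw [← hN]
    exact exists_eq_add_of_apply_sub_eq (Y := (Y · ω)) (by rw [hY0]; omega) hω
  refine ⟨hpmf, fun q hq j n hn ↦ ?_⟩
  have hNmeas : Measurable (N n) := by
    simpa only [← hN] using measurable_firstPassage_partialSum hX hposX hn
  exact lintegral_rpow_le_of_measure_preimage_le
    (measurable_apply_index hmeas ((measurable_from_nat (f := (· - j))).comp hNmeas)) (hmeas 1) hq
    fun b hb ↦ hpmf j b n hb hn

/-- Let `(Y_i)_{i≥1}` be i.i.d. positive-integer-valued random variables with finite mean,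
with the convention `Y_0 = 0`.  Let `S_m = Σ_{i=1}^m Y_i` and let
`N(n) = min{m ≥ 1 : S_m ≥ n}` be the first-passage time.  Then for all `j ≥ 0`, `k ≥ 1` and
`n ≥ 1`, `P(Y_{N(n)−j} = k) ≤ (k + j·E Y_1)·P(Y_1 = k)`, and consequently, for every real
`q > 0`, `E[Y_{N(n)−j}^q] ≤ E[Y_1^{q+1}] + j·(E Y_1)·E[Y_1^q]`. -/
theorem renewal_window_bound {Ω : Type*} [MeasurableSpace Ω]
    (μ : Measure Ω) [IsProbabilityMeasure μ]
    (Y : ℕ → Ω → ℕ)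
    (hY0 : ∀ ω, Y 0 ω = 0)
    (hmeas : ∀ i, Measurable (Y i))
    (hpos : ∀ i, 1 ≤ i → ∀ ω, 1 ≤ Y i ω)
    (hindep : iIndepFun (fun i : ℕ => Y (i + 1)) μ)
    (hident : ∀ i, 1 ≤ i → Measure.map (Y i) μ = Measure.map (Y 1) μ)
    (hmean : (∫⁻ ω, (Y 1 ω : ℝ≥0∞) ∂μ) < ⊤) :
    let S : ℕ → Ω → ℕ := fun m ω => ∑ i ∈ Finset.Icc 1 m, Y i ω
    let N : ℕ → Ω → ℕ := fun n ω => sInf {m | 1 ≤ m ∧ n ≤ S m ω}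
    (∀ j k n : ℕ, 1 ≤ k → 1 ≤ n →
      μ {ω | Y (N n ω - j) ω = k} ≤
        ((k : ℝ≥0∞) + (j : ℝ≥0∞) * ∫⁻ ω, (Y 1 ω : ℝ≥0∞) ∂μ) * μ {ω | Y 1 ω = k}) ∧
    (∀ (q : ℝ), 0 < q → ∀ j n : ℕ, 1 ≤ n →
      (∫⁻ ω, (Y (N n ω - j) ω : ℝ≥0∞) ^ q ∂μ) ≤
        (∫⁻ ω, (Y 1 ω : ℝ≥0∞) ^ (q + 1) ∂μ) +
          (j : ℝ≥0∞) * (∫⁻ ω, (Y 1 ω : ℝ≥0∞) ∂μ) * ∫⁻ ω, (Y 1 ω : ℝ≥0∞) ^ q ∂μ) :=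
  renewal_window_bound_general μ Y hY0 hmeas hpos hindep hident
end

section
/- Let b ≥ 1 and let ℓ_1,…,ℓ_b and r_1,…,r_b be positive integers. For i∈[b] and positive integers ℓ', r', define α_{L,i}(ℓ') = C(ℓ'−1+[i=1 and ℓ_1>1]+[i=b and r_b=1], ℓ_i−1+[i=b and r_b=1]) and α_{R,i}(r') = C(r'−1+[i=b and r_b>1]+[i=1 and ℓ_1=1], r_i−1+[i=1 and ℓ_1=1]), where [·] denotes the indicator (0 or 1) and C the binomial coefficient. If L and R are random variables with P(L=ℓ)=P(R=ℓ)=2^{−ℓ} for every integer ℓ≥1, then for every i∈[b]: E[α_{L,i}(L)] = (1+[i=1 and ℓ_1>1])·(1+[i=b and r_b=1]) and E[α_{R,i}(R)] = (1+[i=b and r_b>1])·(1+[i=1 and ℓ_1=1]). -/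
/-! Every expectation in the statement has the form `∑_{x ≥ 0} 2^{-(x+1)} C(x + a, k)` with
`a ≤ k`, where `a = [P] + [Q]` is the sum of the two indicators. Dropping the first `k - a`
terms, which vanish, leaves `2^{a-k-1}` times the negative binomial series
`∑_n C(n + k, k) 2^{-n} = 2^{k+1}`, so the sum is `2^a = (1 + [P])(1 + [Q])`. -/

/-- `α_{L,i}(ℓ') = C(ℓ'−1+[i=1 ∧ ℓ_1>1]+[i=b ∧ r_b=1], ℓ_i−1+[i=b ∧ r_b=1])`, where the
blocks are indexed by `i : Fin b` (so `i = 1` in the paper corresponds to `(i : ℕ) = 0`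
and `i = b` to `(i : ℕ) = b − 1`). -/
def alphaL {b : ℕ} (ℓ r : Fin b → ℕ) (i : Fin b) (x : ℕ) : ℕ :=
  Nat.choose
    (x - 1 + (if (i : ℕ) = 0 ∧ 1 < ℓ i then 1 else 0) +
      (if (i : ℕ) = b - 1 ∧ r i = 1 then 1 else 0))
    (ℓ i - 1 + (if (i : ℕ) = b - 1 ∧ r i = 1 then 1 else 0))

/-- `α_{R,i}(r') = C(r'−1+[i=b ∧ r_b>1]+[i=1 ∧ ℓ_1=1], r_i−1+[i=1 ∧ ℓ_1=1])`. -/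
def alphaR {b : ℕ} (ℓ r : Fin b → ℕ) (i : Fin b) (x : ℕ) : ℕ :=
  Nat.choose
    (x - 1 + (if (i : ℕ) = b - 1 ∧ 1 < r i then 1 else 0) +
      (if (i : ℕ) = 0 ∧ ℓ i = 1 then 1 else 0))
    (r i - 1 + (if (i : ℕ) = 0 ∧ ℓ i = 1 then 1 else 0))

theorem hasSum_choose_add_mul_geometric {𝕜 : Type*} [NormedField 𝕜] [CompleteSpace 𝕜]
    (a d : ℕ) {r : 𝕜} (hr : ‖r‖ < 1) :
    HasSum (fun n ↦ ((n + a).choose (a + d) : 𝕜) * r ^ n) (r ^ d / (1 - r) ^ (a + d + 1)) := by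
  have hvanish : ∑ i ∈ Finset.range d, ((i + a).choose (a + d) : 𝕜) * r ^ i = 0 :=
    Finset.sum_eq_zero fun i hi ↦ by
      rw [Nat.choose_eq_zero_of_lt (by simp at hi; omega), Nat.cast_zero, zero_mul]
  have hshifted : HasSum (fun n ↦ ((n + d + a).choose (a + d) : 𝕜) * r ^ (n + d))
      (r ^ d / (1 - r) ^ (a + d + 1)) := by
    rw [← mul_one_div]
    refine ((hasSum_choose_mul_geometric_of_norm_lt_one (a + d) hr).mul_left (r ^ d)).congr_fun
      fun n ↦ ?_
    rw [add_right_comm, add_assoc, pow_add, mul_comm (r ^ n), mul_left_comm]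
  have h :=
    (hasSum_nat_add_iff (f := fun n ↦ ((n + a).choose (a + d) : 𝕜) * r ^ n) d).mp hshifted
  rwa [hvanish, add_zero] at h

theorem tsum_half_pow_succ_mul_choose_add {a k : ℕ} (h : a ≤ k) :
    ∑' x : ℕ, (1 / 2 : ℝ) ^ (x + 1) * ((x + a).choose k : ℝ) = 2 ^ a := by
  obtain ⟨d, rfl⟩ := Nat.exists_eq_add_of_le h
  have hsum :=
    (hasSum_choose_add_mul_geometric a d (r := (1 / 2 : ℝ)) (by norm_num)).mul_left (1 / 2)
  rw [(hsum.congr_fun fun x ↦ by ring).tsum_eq]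
  norm_num [pow_add]
  field_simp
  rw [← mul_pow]
  norm_num

theorem two_pow_ite (P : Prop) [Decidable P] :
    (2 : ℝ) ^ (if P then 1 else 0 : ℕ) = 1 + if P then 1 else 0 := by
  split_ifs <;> norm_num

theorem tsum_half_pow_succ_mul_choose_ite (P Q : Prop) [Decidable P] [Decidable Q] {m : ℕ}
    (h : P → 1 < m) :
    ∑' x : ℕ, (1 / 2 : ℝ) ^ (x + 1) *
        ((x + 1 - 1 + (if P then 1 else 0) + (if Q then 1 else 0)).choose
          (m - 1 + if Q then 1 else 0) : ℝ) =
      (1 + if P then (1 : ℝ) else 0) * (1 + if Q then (1 : ℝ) else 0) := by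
  have hle : (if P then 1 else 0) ≤ m - 1 := by
    split_ifs with hP
    · exact Nat.le_sub_one_of_lt (h hP)
    · exact Nat.zero_le _
  rw [← two_pow_ite, ← two_pow_ite, ← pow_add,
    ← tsum_half_pow_succ_mul_choose_add (Nat.add_le_add_right hle _)]
  exact tsum_congr fun x ↦ by rw [Nat.add_sub_cancel, add_assoc]

theorem expectation_alpha_geometric_general (b : ℕ) (ℓ r : Fin b → ℕ) (i : Fin b) :
    (∑' x : ℕ, ((1 : ℝ) / 2) ^ (x + 1) * (alphaL ℓ r i (x + 1) : ℝ)) =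
      (1 + if (i : ℕ) = 0 ∧ 1 < ℓ i then (1 : ℝ) else 0) *
        (1 + if (i : ℕ) = b - 1 ∧ r i = 1 then (1 : ℝ) else 0) ∧
    (∑' x : ℕ, ((1 : ℝ) / 2) ^ (x + 1) * (alphaR ℓ r i (x + 1) : ℝ)) =
      (1 + if (i : ℕ) = b - 1 ∧ 1 < r i then (1 : ℝ) else 0) *
        (1 + if (i : ℕ) = 0 ∧ ℓ i = 1 then (1 : ℝ) else 0) :=
  ⟨tsum_half_pow_succ_mul_choose_ite _ _ And.right,
    tsum_half_pow_succ_mul_choose_ite _ _ And.right⟩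

/-- If `L` and `R` are geometric, `P(L = x) = P(R = x) = 2^{−x}` for `x ≥ 1`, then
`E[α_{L,i}(L)] = (1+[i=1 ∧ ℓ_1>1])(1+[i=b ∧ r_b=1])` and
`E[α_{R,i}(R)] = (1+[i=b ∧ r_b>1])(1+[i=1 ∧ ℓ_1=1])`, the expectations being the sums
`Σ_{x≥1} 2^{−x} α(x)`. -/
theorem expectation_alpha_geometric (b : ℕ) (hb : 1 ≤ b) (ℓ r : Fin b → ℕ)
    (hℓ : ∀ i, 1 ≤ ℓ i) (hr : ∀ i, 1 ≤ r i) (i : Fin b) :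
    (∑' x : ℕ, ((1 : ℝ) / 2) ^ (x + 1) * (alphaL ℓ r i (x + 1) : ℝ)) =
      (1 + if (i : ℕ) = 0 ∧ 1 < ℓ i then (1 : ℝ) else 0) *
        (1 + if (i : ℕ) = b - 1 ∧ r i = 1 then (1 : ℝ) else 0) ∧
    (∑' x : ℕ, ((1 : ℝ) / 2) ^ (x + 1) * (alphaR ℓ r i (x + 1) : ℝ)) =
      (1 + if (i : ℕ) = b - 1 ∧ 1 < r i then (1 : ℝ) else 0) *
        (1 + if (i : ℕ) = 0 ∧ ℓ i = 1 then (1 : ℝ) else 0) :=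
  expectation_alpha_geometric_general b ℓ r i
end
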